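/- arXiv:0711.1479 — 5 statements merged into one kernel-verified Lean document; each statement's English description precedes it below -/
import Mathlib

section
/- Let B be a 3×3 real symmetric positive-definite matrix and let h be a map from 3×3 real symmetric positive-definite matrices to 3×3 real symmetric matrices that is isotropic, i.e. for every 3×3 real orthogonal matrix R with det R = 1 one has h(Rᵀ B R) = Rᵀ h(B) R. Then every eigenvector of B is an eigenvector of h(B): if n is a nonzero vector in ℝ³ and B·n = μ·n for some real μ, then there exists a real ν with h(B)·n = ν·n. -/
/-!
Let `n` be an eigenvector of `B` and let `R = (2 / |n|²) n nᵀ - 1` be the rotation by `π` about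
the axis `n`. Since `B` is symmetric, `n nᵀ` commutes with `B`, hence so does `R`, so `R` fixes
`B` under conjugation. Isotropy then makes `R` fix `h B` as well, i.e. `h B` commutes with `R`
and therefore with `n nᵀ`; applying both products to `n` shows that `(h B) n` is
a multiple of `n`.
-/

open Matrix

theorem conj_eq_self_iff_commute {M : Type*} [Monoid M] {r a : M} (hr : r * r = 1) :
    r * a * r = a ↔ Commute a r := by
  constructor
  · intro h
    calc a * r = r * a * r * r := by rw [h]
      _ = r * a := by rw [mul_assoc, hr, mul_one]
  · intro h
    rw [← h.eq, mul_assoc, hr, mul_one]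

namespace Matrix

variable {ι K : Type*} [Fintype ι] [Field K] {n : ι → K}

theorem commute_vecMulVec_of_isSymm_of_mulVec_eq_smul {B : Matrix ι ι K} (hB : B.IsSymm) {μ : K}
    (hμ : B *ᵥ n = μ • n) : Commute B (vecMulVec n n) := by
  have hvecMul : n ᵥ* B = μ • n := by rw [← mulVec_transpose, hB.eq, hμ]
  rw [Commute, SemiconjBy, mul_vecMulVec, vecMulVec_mul, hμ, hvecMul, smul_vecMulVec,
    vecMulVec_smul]

theorem exists_mulVec_eq_smul_of_commute_vecMulVec (hn : n ⬝ᵥ n ≠ 0) {A : Matrix ι ι K}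
    (hA : Commute A (vecMulVec n n)) : ∃ ν : K, A *ᵥ n = ν • n := by
  refine ⟨(n ⬝ᵥ (A *ᵥ n)) / (n ⬝ᵥ n), ?_⟩
  have hAn : (n ⬝ᵥ n) • (A *ᵥ n) = (n ⬝ᵥ (A *ᵥ n)) • n := by
    simpa only [← mulVec_mulVec, vecMulVec_mulVec, mulVec_smul, op_smul_eq_smul]
      using congrArg (· *ᵥ n) hA.eq
  rw [div_eq_inv_mul, mul_smul, ← hAn, smul_smul, inv_mul_cancel₀ hn, one_smul]

variable [DecidableEq ι]

/-- For real `n ≠ 0` in three dimensions, the rotation by `π` about the axis `n`. -/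
def halfTurn (n : ι → K) : Matrix ι ι K :=
  (2 / (n ⬝ᵥ n)) • vecMulVec n n - 1

theorem transpose_halfTurn : (halfTurn n)ᵀ = halfTurn n := by
  simp [halfTurn, transpose_sub]

theorem halfTurn_mul_self (hn : n ⬝ᵥ n ≠ 0) : halfTurn n * halfTurn n = 1 := by
  have hQQ : vecMulVec n n * vecMulVec n n = (n ⬝ᵥ n) • vecMulVec n n := by
    rw [vecMulVec_mul_vecMulVec, vecMulVec_smul]
  have hcoeff : 2 / (n ⬝ᵥ n) * (2 / (n ⬝ᵥ n)) * (n ⬝ᵥ n) = 2 / (n ⬝ᵥ n) + 2 / (n ⬝ᵥ n) := by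
    field_simp; ring
  rw [halfTurn, sub_mul, mul_sub, mul_sub, smul_mul_smul_comm, hQQ, smul_smul, one_mul, mul_one,
    mul_one, hcoeff, add_smul]
  abel

theorem det_halfTurn (hn : n ⬝ᵥ n ≠ 0) : (halfTurn n).det = (-1) ^ (Fintype.card ι + 1) := by
  have hneg :
      halfTurn n = -(1 + replicateCol Unit (-(2 / (n ⬝ᵥ n)) • n) * replicateRow Unit n) := by
    rw [halfTurn, ← vecMulVec_eq, smul_vecMulVec, neg_smul]
    abel
  rw [hneg, det_neg, det_one_add_replicateCol_mul_replicateRow, dotProduct_smul, smul_eq_mul,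
    neg_mul, div_mul_cancel₀ _ hn, pow_succ]
  norm_num

theorem commute_halfTurn_iff [NeZero (2 : K)] (hn : n ⬝ᵥ n ≠ 0) {A : Matrix ι ι K} :
    Commute A (halfTurn n) ↔ Commute A (vecMulVec n n) := by
  have h2 : 2 / (n ⬝ᵥ n) ≠ 0 := div_ne_zero two_ne_zero hn
  refine ⟨fun h => ?_, fun h => (h.smul_right _).sub_right (Commute.one_right A)⟩
  have hQ := (h.add_right (Commute.one_right A)).smul_right (2 / (n ⬝ᵥ n))⁻¹
  rwa [halfTurn, sub_add_cancel, smul_smul, inv_mul_cancel₀ h2, one_smul] at hQ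

end Matrix

theorem eigenvector_of_isotropic_general
    (B : Matrix (Fin 3) (Fin 3) ℝ) (hB : B.PosDef)
    (h : Matrix (Fin 3) (Fin 3) ℝ → Matrix (Fin 3) (Fin 3) ℝ)
    (hiso : ∀ M : Matrix (Fin 3) (Fin 3) ℝ, M.PosDef →
      ∀ R : Matrix (Fin 3) (Fin 3) ℝ, Rᵀ * R = 1 → R.det = 1 →
        h (Rᵀ * M * R) = Rᵀ * h M * R)
    (n : Fin 3 → ℝ) (hn : n ≠ 0) (μ : ℝ) (hμ : B.mulVec n = μ • n) :
    ∃ ν : ℝ, (h B).mulVec n = ν • n := by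
  have hnn : n ⬝ᵥ n ≠ 0 := fun h0 => hn (dotProduct_self_eq_zero.mp h0)
  set R := halfTurn n
  have hRR : R * R = 1 := halfTurn_mul_self hnn
  have hRdet : R.det = 1 := by rw [det_halfTurn hnn]; norm_num
  have hBR : Commute B R := (commute_halfTurn_iff hnn).2 <|
    commute_vecMulVec_of_isSymm_of_mulVec_eq_smul (isHermitian_iff_isSymm.mp hB.isHermitian) hμ
  have hhB : R * h B * R = h B := by
    have hconj := hiso B hB R (by rw [transpose_halfTurn, hRR]) hRdet
    rw [transpose_halfTurn, (conj_eq_self_iff_commute hRR).2 hBR] at hconj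
    exact hconj.symm
  exact exists_mulVec_eq_smul_of_commute_vecMulVec hnn <|
    (commute_halfTurn_iff hnn).1 ((conj_eq_self_iff_commute hRR).1 hhB)

/-- If `h` is an isotropic map from symmetric positive-definite `3×3` real matrices to
symmetric matrices, then every eigenvector of a symmetric positive-definite `B` is an
eigenvector of `h B`. -/
theorem eigenvector_of_isotropic
    (B : Matrix (Fin 3) (Fin 3) ℝ) (hB : B.PosDef)
    (h : Matrix (Fin 3) (Fin 3) ℝ → Matrix (Fin 3) (Fin 3) ℝ)
    (hsym : ∀ M : Matrix (Fin 3) (Fin 3) ℝ, M.PosDef → (h M)ᵀ = h M)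
    (hiso : ∀ M : Matrix (Fin 3) (Fin 3) ℝ, M.PosDef →
      ∀ R : Matrix (Fin 3) (Fin 3) ℝ, Rᵀ * R = 1 → R.det = 1 →
        h (Rᵀ * M * R) = Rᵀ * h M * R)
    (n : Fin 3 → ℝ) (hn : n ≠ 0) (μ : ℝ) (hμ : B.mulVec n = μ • n) :
    ∃ ν : ℝ, (h B).mulVec n = ν • n :=
  eigenvector_of_isotropic_general B hB h hiso n hn μ hμ
end

section
/- Let B be a 3×3 real symmetric positive-definite matrix and let h be an isotropic map from 3×3 real symmetric positive-definite matrices to 3×3 real symmetric matrices. Then B and h(B) commute: B * h(B) = h(B) * B. -/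
/-!
Diagonalize `B = V D Vᵀ` with `V` a rotation; isotropy gives `h B = V h(D) Vᵀ`, so it suffices
that `h(D)` commutes with the diagonal matrix `D`. The rotation by `π` about the `i`-th coordinate
axis is a diagonal sign matrix, so it fixes `D`, and isotropy makes `h(D)` invariant under
conjugation by it. That conjugation negates the off-diagonal entries of row `i`, hence `h(D)`
is diagonal.
-/
open Matrix

namespace Matrix

variable {n R : Type*} [DecidableEq n] [CommRing R]

/-- The rotation by `π` about the `i`-th coordinate axis when `card n = 3`. -/
def signFlip (i : n) : Matrix n n R :=
  diagonal (Function.update (-1) i 1)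

@[simp]
theorem transpose_signFlip (i : n) : (signFlip i : Matrix n n R)ᵀ = signFlip i :=
  diagonal_transpose _

theorem update_neg_one_mul_self (i : n) :
    (Function.update (-1) i 1 : n → R) * Function.update (-1) i 1 = 1 := by
  ext t
  by_cases ht : t = i <;> simp [ht]

variable [Fintype n]

theorem diagonal_mul_self_of_mul_self_eq_one {s : n → R} (hs : s * s = 1) :
    diagonal s * diagonal s = 1 := by
  rw [diagonal_mul_diagonal', ← Pi.mul_def, hs, ← diagonal_one]
  rfl

theorem diagonal_mul_diagonal_mul_diagonal_of_mul_self_eq_one {s : n → R} (hs : s * s = 1)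
    (d : n → R) : diagonal s * diagonal d * diagonal s = diagonal d := by
  rw [(commute_diagonal s d).eq, mul_assoc, diagonal_mul_self_of_mul_self_eq_one hs, mul_one]

@[simp]
theorem signFlip_mul_self (i : n) : (signFlip i : Matrix n n R) * signFlip i = 1 :=
  diagonal_mul_self_of_mul_self_eq_one (update_neg_one_mul_self i)

@[simp]
theorem det_signFlip (i : n) :
    (signFlip i : Matrix n n R).det = (-1) ^ (Fintype.card n - 1) := by
  rw [signFlip, det_diagonal, Finset.prod_update_of_mem (Finset.mem_univ i), one_mul]
  simp [Finset.card_sdiff]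

theorem signFlip_mul_diagonal_mul_signFlip (i : n) (d : n → R) :
    signFlip i * diagonal d * signFlip i = diagonal d :=
  diagonal_mul_diagonal_mul_diagonal_of_mul_self_eq_one (update_neg_one_mul_self i) d

theorem signFlip_mul_mul_signFlip_apply_of_ne {i j : n} (hij : i ≠ j) (A : Matrix n n R) :
    (signFlip i * A * signFlip i : Matrix n n R) i j = -A i j := by
  simp [signFlip, diagonal_mul, mul_diagonal, Function.update_of_ne hij.symm]

theorem isDiag_of_forall_signFlip_conj_eq [IsAddTorsionFree R] {A : Matrix n n R}
    (hA : ∀ i, signFlip i * A * signFlip i = A) : A.IsDiag := fun i j hij =>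
  neg_eq_self.mp <| signFlip_mul_mul_signFlip_apply_of_ne hij A ▸ congrFun₂ (hA i) i j

theorem IsHermitian.exists_det_eq_one_conj_diagonal [Nonempty n] {B : Matrix n n ℝ}
    (hB : B.IsHermitian) :
    ∃ V : Matrix n n ℝ, Vᵀ * V = 1 ∧ V.det = 1 ∧ B = V * diagonal hB.eigenvalues * Vᵀ := by
  set U : Matrix n n ℝ := ↑hB.eigenvectorUnitary
  have hU : Uᵀ * U = 1 := by
    simpa [U, star_eq_conjTranspose] using Unitary.coe_star_mul_self hB.eigenvectorUnitary
  have hBU : B = U * diagonal hB.eigenvalues * Uᵀ := by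
    simpa [U, star_eq_conjTranspose] using hB.spectral_theorem
  have hdetU : U.det * U.det = 1 := by
    simpa using congrArg det hU
  -- Flipping the sign of one column of `U` if needed makes its determinant `1`.
  set s : n → ℝ := Function.update 1 (Classical.arbitrary n) U.det
  have hs : s * s = 1 := by
    ext t
    by_cases ht : t = Classical.arbitrary n <;> simp [s, ht, hdetU]
  refine ⟨U * diagonal s, ?_, ?_, ?_⟩
  · rw [transpose_mul, diagonal_transpose, mul_assoc, ← mul_assoc Uᵀ, hU, one_mul,
      diagonal_mul_self_of_mul_self_eq_one hs]
  · rw [det_mul, det_diagonal, Finset.prod_update_of_mem (Finset.mem_univ _)]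
    simp [hdetU]
  · conv_lhs => rw [hBU, ← diagonal_mul_diagonal_mul_diagonal_of_mul_self_eq_one hs]
    simp only [transpose_mul, diagonal_transpose, mul_assoc]

end Matrix

theorem Commute.conj_of_mul_eq_one {M : Type*} [Monoid M] {a b u v : M} (hvu : v * u = 1)
    (hab : Commute a b) : Commute (u * a * v) (u * b * v) :=
  calc u * a * v * (u * b * v) = u * (a * (v * u) * b) * v := by simp only [mul_assoc]
    _ = u * (b * (v * u) * a) * v := by rw [hvu, mul_one, mul_one, hab.eq]
    _ = u * b * v * (u * a * v) := by simp only [mul_assoc]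

theorem commute_of_isotropic_general
    (B : Matrix (Fin 3) (Fin 3) ℝ) (hB : B.PosDef)
    (h : Matrix (Fin 3) (Fin 3) ℝ → Matrix (Fin 3) (Fin 3) ℝ)
    (hiso : ∀ M : Matrix (Fin 3) (Fin 3) ℝ, M.PosDef →
      ∀ R : Matrix (Fin 3) (Fin 3) ℝ, Rᵀ * R = 1 → R.det = 1 →
        h (Rᵀ * M * R) = Rᵀ * h M * R) :
    B * h B = h B * B := by
  obtain ⟨V, hV, hVdet, hBV⟩ := hB.isHermitian.exists_det_eq_one_conj_diagonal
  set D := diagonal hB.isHermitian.eigenvalues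
  have hD : D.PosDef := posDef_diagonal_iff.mpr hB.eigenvalues_pos
  have hhD : (h D).IsDiag := isDiag_of_forall_signFlip_conj_eq fun i => by
    simpa [D, signFlip_mul_diagonal_mul_signFlip] using
      (hiso D hD (signFlip i) (by simp) (by simp)).symm
  have hhB : h B = V * h D * Vᵀ := by
    simpa [hBV] using hiso D hD Vᵀ (by simpa using mul_eq_one_comm.mp hV) (by simpa using hVdet)
  rw [hhB, hBV]
  exact (Commute.conj_of_mul_eq_one hV (hhD.diagonal_diag ▸ commute_diagonal _ _)).eq

/-- If `h` is an isotropic map from symmetric positive-definite `3×3` real matrices to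
symmetric matrices, then `B` and `h B` commute. -/
theorem commute_of_isotropic
    (B : Matrix (Fin 3) (Fin 3) ℝ) (hB : B.PosDef)
    (h : Matrix (Fin 3) (Fin 3) ℝ → Matrix (Fin 3) (Fin 3) ℝ)
    (hsym : ∀ M : Matrix (Fin 3) (Fin 3) ℝ, M.PosDef → (h M)ᵀ = h M)
    (hiso : ∀ M : Matrix (Fin 3) (Fin 3) ℝ, M.PosDef →
      ∀ R : Matrix (Fin 3) (Fin 3) ℝ, Rᵀ * R = 1 → R.det = 1 →
        h (Rᵀ * M * R) = Rᵀ * h M * R) :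
    B * h B = h B * B :=
  commute_of_isotropic_general B hB h hiso
end

section
/- Let F be an invertible 3×3 real matrix with det F > 0, set C = Fᵀ F and B = F Fᵀ (both symmetric positive definite), and let h be an isotropic map from 3×3 real symmetric positive-definite matrices to 3×3 real symmetric matrices. Then F * h(C) * Fᵀ = √B * h(B) * √B, where √B is the positive-semidefinite square root of B. In other words, the push-forward F h(FᵀF) Fᵀ depends on F only through B = F Fᵀ. -/
/-!
Polar decomposition: `F = R U` with `U = √(Fᵀ F)` and `R` a rotation (its determinant is positive
because `det F` and `det U` are). Then `F Fᵀ = R (Fᵀ F) Rᵀ`, so `√(F Fᵀ) = R U Rᵀ` and, by isotropy,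
`h (F Fᵀ) = R h(Fᵀ F) Rᵀ`; multiplying out, `√B h(B) √B = R U h(C) U Rᵀ = F h(C) Fᵀ`.
-/

open Matrix

/-- The positive semidefinite square root, as defined in the older Mathlib
(removed from current Mathlib in favour of `CFC.sqrt`). -/
noncomputable def Matrix.PosSemidef.sqrt {n : Type*} [Fintype n] [DecidableEq n]
    {A : Matrix n n ℝ} (hA : A.PosSemidef) : Matrix n n ℝ :=
  hA.1.eigenvectorUnitary.1 * diagonal ((↑) ∘ (√·) ∘ hA.1.eigenvalues) *
    (star hA.1.eigenvectorUnitary : Matrix n n ℝ)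

open scoped MatrixOrder

namespace Matrix

variable {n : Type*} [Fintype n] [DecidableEq n]

theorem PosSemidef.sqrt_eq_cfcSqrt {A : Matrix n n ℝ} (hA : A.PosSemidef) :
    hA.sqrt = CFC.sqrt A := by
  rw [CFC.sqrt_eq_cfc, cfc_nnreal_eq_real _ A hA.nonneg, hA.1.cfc_eq]
  simp only [IsHermitian.cfc, Matrix.PosSemidef.sqrt, Unitary.conjStarAlgAut_apply]
  congr 3
  funext i
  simp [max_eq_left (hA.eigenvalues_nonneg i)]

theorem transpose_cfcSqrt (A : Matrix n n ℝ) : (CFC.sqrt A)ᵀ = CFC.sqrt A := by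
  simpa using (CFC.sqrt_nonneg A).posSemidef.isHermitian.eq

theorem cfcSqrt_mul_mul_transpose_of_mem_orthogonalGroup {R A : Matrix n n ℝ}
    (hR : R ∈ orthogonalGroup n ℝ) (hA : A.PosSemidef) :
    CFC.sqrt (R * A * Rᵀ) = R * CFC.sqrt A * Rᵀ := by
  have hRtR : Rᵀ * R = 1 := (mem_orthogonalGroup_iff' n ℝ).mp hR
  have hconj : ∀ S : Matrix n n ℝ, S.PosSemidef → 0 ≤ R * S * Rᵀ := fun S hS => by
    simpa using (hS.mul_mul_conjTranspose_same R).nonneg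
  rw [CFC.sqrt_eq_iff _ _ (hconj A hA) (hconj _ (CFC.sqrt_nonneg A).posSemidef)]
  calc R * CFC.sqrt A * Rᵀ * (R * CFC.sqrt A * Rᵀ)
      = R * CFC.sqrt A * (Rᵀ * R) * CFC.sqrt A * Rᵀ := by simp only [Matrix.mul_assoc]
    _ = R * A * Rᵀ := by
      rw [hRtR, Matrix.mul_one, Matrix.mul_assoc R, CFC.sqrt_mul_sqrt_self A hA.nonneg]

theorem exists_mem_specialOrthogonalGroup_eq_mul_cfcSqrt {F : Matrix n n ℝ} (hF : 0 < F.det) :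
    ∃ R ∈ specialOrthogonalGroup n ℝ, F = R * CFC.sqrt (Fᵀ * F) := by
  set U := CFC.sqrt (Fᵀ * F)
  have hUt : Uᵀ = U := transpose_cfcSqrt _
  have hUU : U * U = Fᵀ * F :=
    CFC.sqrt_mul_sqrt_self _ (posSemidef_conjTranspose_mul_self F).nonneg
  have hUdet : 0 < U.det := by
    have hsq : U.det * U.det = F.det * F.det := by
      simpa [det_mul, det_transpose] using congrArg det hUU
    have := (CFC.sqrt_nonneg (Fᵀ * F)).posSemidef.det_nonneg
    nlinarith
  have hUinv : U⁻¹ * U = 1 := nonsing_inv_mul U hUdet.ne'.isUnit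
  have hRtR : (F * U⁻¹)ᵀ * (F * U⁻¹) = 1 :=
    calc (F * U⁻¹)ᵀ * (F * U⁻¹) = U⁻¹ * (U * U) * U⁻¹ := by
          rw [transpose_mul, transpose_nonsing_inv, hUt, hUU]
          simp only [Matrix.mul_assoc]
      _ = 1 := by
          rw [← Matrix.mul_assoc, hUinv, Matrix.one_mul, mul_nonsing_inv U hUdet.ne'.isUnit]
  set R := F * U⁻¹
  have hRU : F = R * U := by rw [Matrix.mul_assoc, hUinv, Matrix.mul_one]
  have hRdet : R.det = 1 := by
    have hsq : R.det * R.det = 1 := by simpa [det_mul, det_transpose] using congrArg det hRtR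
    have hpos : 0 < R.det * U.det := by rwa [← det_mul, ← hRU]
    have hRpos : 0 < R.det := pos_of_mul_pos_left hpos hUdet.le
    nlinarith
  exact ⟨R, mem_specialOrthogonalGroup_iff.mpr ⟨(mem_orthogonalGroup_iff' n ℝ).mpr hRtR, hRdet⟩,
    hRU⟩

end Matrix

theorem pushforward_eq_sqrt_mul_sqrt_general
    (F : Matrix (Fin 3) (Fin 3) ℝ) (hFdet : 0 < F.det)
    (hC : (Fᵀ * F).PosDef) (hB : (F * Fᵀ).PosDef)
    (h : Matrix (Fin 3) (Fin 3) ℝ → Matrix (Fin 3) (Fin 3) ℝ)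
    (hiso : ∀ M : Matrix (Fin 3) (Fin 3) ℝ, M.PosDef →
      ∀ R : Matrix (Fin 3) (Fin 3) ℝ, Rᵀ * R = 1 → R.det = 1 →
        h (Rᵀ * M * R) = Rᵀ * h M * R) :
    F * h (Fᵀ * F) * Fᵀ = hB.posSemidef.sqrt * h (F * Fᵀ) * hB.posSemidef.sqrt := by
  obtain ⟨R, hR, hFRU⟩ := exists_mem_specialOrthogonalGroup_eq_mul_cfcSqrt hFdet
  obtain ⟨hRorth, hRdet⟩ := mem_specialOrthogonalGroup_iff.mp hR
  have hRRt : R * Rᵀ = 1 := (mem_orthogonalGroup_iff _ ℝ).mp hRorth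
  have hRtR : Rᵀ * R = 1 := (mem_orthogonalGroup_iff' _ ℝ).mp hRorth
  set U := CFC.sqrt (Fᵀ * F)
  have hUt : Uᵀ = U := transpose_cfcSqrt _
  have hBC : F * Fᵀ = R * (Fᵀ * F) * Rᵀ :=
    calc F * Fᵀ = R * (U * U) * Rᵀ := by
          rw [hFRU, transpose_mul, hUt]
          simp only [Matrix.mul_assoc]
      _ = R * (Fᵀ * F) * Rᵀ := by
          rw [CFC.sqrt_mul_sqrt_self _ hC.posSemidef.nonneg]
  have hsqrtB : hB.posSemidef.sqrt = R * U * Rᵀ := by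
    rw [hB.posSemidef.sqrt_eq_cfcSqrt, hBC,
      cfcSqrt_mul_mul_transpose_of_mem_orthogonalGroup hRorth hC.posSemidef]
  have hhB : h (F * Fᵀ) = R * h (Fᵀ * F) * Rᵀ := by
    simpa [hBC] using hiso _ hC Rᵀ (by simpa using hRRt) (by simpa using hRdet)
  -- `G` shields the `F` inside `h (Fᵀ * F)` from the rewrite `F = R * U`.
  set G := h (Fᵀ * F)
  rw [hsqrtB, hhB, hFRU, transpose_mul, hUt]
  simp only [Matrix.mul_assoc, ← Matrix.mul_assoc Rᵀ R, hRtR, Matrix.one_mul]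

/-- For an invertible `F` with positive determinant, `C = Fᵀ F` and `B = F Fᵀ` are symmetric
positive definite, and for an isotropic map `h` the push-forward `F h(C) Fᵀ` equals
`√B * h(B) * √B`, so it depends on `F` only through `B`. -/
theorem pushforward_eq_sqrt_mul_sqrt
    (F : Matrix (Fin 3) (Fin 3) ℝ) (hFdet : 0 < F.det)
    (hC : (Fᵀ * F).PosDef) (hB : (F * Fᵀ).PosDef)
    (h : Matrix (Fin 3) (Fin 3) ℝ → Matrix (Fin 3) (Fin 3) ℝ)
    (hsym : ∀ M : Matrix (Fin 3) (Fin 3) ℝ, M.PosDef → (h M)ᵀ = h M)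
    (hiso : ∀ M : Matrix (Fin 3) (Fin 3) ℝ, M.PosDef →
      ∀ R : Matrix (Fin 3) (Fin 3) ℝ, Rᵀ * R = 1 → R.det = 1 →
        h (Rᵀ * M * R) = Rᵀ * h M * R) :
    F * h (Fᵀ * F) * Fᵀ = hB.posSemidef.sqrt * h (F * Fᵀ) * hB.posSemidef.sqrt :=
  pushforward_eq_sqrt_mul_sqrt_general F hFdet hC hB h hiso
end

section
/- The matrix exponential exp : Matrix (Fin n) (Fin n) ℝ → Matrix (Fin n) (Fin n) ℝ is Fréchet differentiable at every point A, and its derivative in the direction δA is given by D(exp)(A)(δA) = exp(A) * ∫_{s=0}^{1} exp(-s•A) * δA * exp(s•A) ds. Formally: for every A, the map exp has at A the Fréchet derivative given by the continuous linear map H ↦ exp(A) * ∫ s in (0:ℝ)..1, exp(-s • A) * H * exp(s • A). -/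
open Matrix NormedSpace

attribute [local instance] Matrix.linftyOpNormedAddCommGroup Matrix.linftyOpNormedRing
  Matrix.linftyOpNormedSpace Matrix.linftyOpNormedAlgebra

/-!
Duhamel's formula `exp (X + P) - exp X = ∫ s in 0..1, exp ((1 - s) • X) * P * exp (s • (X + P))`
comes from differentiating `s ↦ exp ((1 - s) • X) * exp (s • (X + P))`. Taking `P = t • H`
writes `exp (A + t • H) - exp A` as `t` times an integral depending continuously on `t`, so the
directional derivative of `exp` at `A` along `H` is that integral at `t = 0`. Since `exp` is
analytic, this directional derivative is `fderiv ℝ exp A H`, and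
`exp ((1 - s) • A) = exp A * exp (-s • A)` pulls `exp A` out of the integral.
-/

theorem hasDerivAt_of_sub_eq_smul {𝕜 E : Type*} [NontriviallyNormedField 𝕜]
    [NormedAddCommGroup E] [NormedSpace 𝕜 E] {f F : 𝕜 → E} {x : 𝕜} (hF : ContinuousAt F x)
    (hf : ∀ t, f t - f x = (t - x) • F t) : HasDerivAt f (F x) x := by
  refine hasDerivAt_iff_tendsto_slope.mpr ((hF.tendsto.mono_left nhdsWithin_le_nhds).congr' ?_)
  filter_upwards [self_mem_nhdsWithin] with t (ht : t ≠ x)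
  rw [slope_def_module, hf, smul_smul, inv_mul_cancel₀ (sub_ne_zero.mpr ht), one_smul]

namespace NormedSpace

variable {𝔸 : Type*} [NormedRing 𝔸] [NormedAlgebra ℝ 𝔸] [CompleteSpace 𝔸]

@[fun_prop]
theorem exp_continuous_real : Continuous (exp : 𝔸 → 𝔸) :=
  letI : NormedAlgebra ℚ 𝔸 := .restrictScalars ℚ ℝ 𝔸
  exp_continuous

theorem exp_add_of_commute_real {x y : 𝔸} (hxy : Commute x y) : exp (x + y) = exp x * exp y :=
  letI : NormedAlgebra ℚ 𝔸 := .restrictScalars ℚ ℝ 𝔸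
  exp_add_of_commute hxy

theorem exp_add_sub_exp_eq_integral (X P : 𝔸) :
    exp (X + P) - exp X = ∫ s in (0:ℝ)..1, exp ((1 - s) • X) * P * exp (s • (X + P)) := by
  have hderiv (s : ℝ) : HasDerivAt (fun s : ℝ => exp ((1 - s) • X) * exp (s • (X + P)))
      (exp ((1 - s) • X) * P * exp (s • (X + P))) s := by
    have h₁ : HasDerivAt (fun s : ℝ => exp ((1 - s) • X)) (-(exp ((1 - s) • X) * X)) s := by
      simpa [Function.comp_def] using
        (hasDerivAt_exp_smul_const X (1 - s)).scomp s ((hasDerivAt_id s).const_sub 1)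
    refine (h₁.mul (hasDerivAt_exp_smul_const' (X + P) s)).congr_deriv ?_
    noncomm_ring
  have hcont : Continuous fun s : ℝ => exp ((1 - s) • X) * P * exp (s • (X + P)) := by
    fun_prop
  rw [intervalIntegral.integral_eq_sub_of_hasDerivAt (fun s _ => hderiv s)
    (hcont.intervalIntegrable 0 1)]
  simp

theorem hasDerivAt_exp_add_smul (A H : 𝔸) :
    HasDerivAt (fun t : ℝ => exp (A + t • H))
      (∫ s in (0:ℝ)..1, exp ((1 - s) • A) * H * exp (s • A)) 0 := by
  set F : ℝ → 𝔸 := fun t => ∫ s in (0:ℝ)..1, exp ((1 - s) • A) * H * exp (s • (A + t • H))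
  have hF : Continuous F :=
    intervalIntegral.continuous_parametric_intervalIntegral_of_continuous' (by fun_prop) 0 1
  have hslope (t : ℝ) : exp (A + t • H) - exp (A + (0:ℝ) • H) = (t - 0) • F t := by
    rw [zero_smul, add_zero, sub_zero, exp_add_sub_exp_eq_integral,
      ← intervalIntegral.integral_smul]
    simp only [mul_smul_comm, smul_mul_assoc]
  simpa [F] using hasDerivAt_of_sub_eq_smul hF.continuousAt hslope

theorem fderiv_exp_apply (A H : 𝔸) :
    fderiv ℝ exp A H = ∫ s in (0:ℝ)..1, exp ((1 - s) • A) * H * exp (s • A) := by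
  have hline : HasDerivAt (fun t : ℝ => A + t • H) H 0 := by
    simpa using ((hasDerivAt_id (0:ℝ)).smul_const H).const_add A
  have hexp : HasFDerivAt exp (fderiv ℝ exp A) (A + (0:ℝ) • H) := by
    simpa using (exp_analytic (𝕂 := ℝ) A).differentiableAt.hasFDerivAt
  exact (hexp.comp_hasDerivAt 0 hline).unique (hasDerivAt_exp_add_smul A H)

theorem integral_exp_mul_mul_exp (A H : 𝔸) :
    ∫ s in (0:ℝ)..1, exp ((1 - s) • A) * H * exp (s • A)
      = exp A * ∫ s in (0:ℝ)..1, exp (-s • A) * H * exp (s • A) := by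
  have hsplit (s : ℝ) : exp ((1 - s) • A) = exp A * exp (-s • A) := by
    rw [← exp_add_of_commute_real ((Commute.refl A).smul_right _)]
    congr 1
    module
  have hint : IntervalIntegrable (fun s : ℝ => exp (-s • A) * H * exp (s • A))
      MeasureTheory.volume 0 1 :=
    Continuous.intervalIntegrable (by fun_prop) 0 1
  simp only [hsplit, mul_assoc] at hint ⊢
  exact (ContinuousLinearMap.mul ℝ 𝔸 (exp A)).intervalIntegral_comp_comm hint

end NormedSpace

/-- The matrix exponential is Fréchet differentiable at every point `A`, with derivative
`H ↦ exp A * ∫ s in 0..1, exp (-s • A) * H * exp (s • A)`. -/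
theorem matrix_exp_hasFDerivAt {n : ℕ} (A : Matrix (Fin n) (Fin n) ℝ) :
    DifferentiableAt ℝ (exp : Matrix (Fin n) (Fin n) ℝ → Matrix (Fin n) (Fin n) ℝ) A ∧
      ∀ H : Matrix (Fin n) (Fin n) ℝ,
        fderiv ℝ (exp : Matrix (Fin n) (Fin n) ℝ → Matrix (Fin n) (Fin n) ℝ) A H =
          exp A * ∫ s in (0:ℝ)..1, exp (-s • A) * H * exp (s • A) :=
  ⟨(exp_analytic A).differentiableAt, fun H =>
    (fderiv_exp_apply A H).trans (integral_exp_mul_mul_exp A H)⟩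
end

section
/- Let A be an n×n real matrix, let B = exp(A), let M be an n×n real matrix commuting with A, and let α : Matrix (Fin n) (Fin n) ℝ → ℝ be Fréchet differentiable at B with derivative δC ↦ trace(M * δC). Then α ∘ exp is Fréchet differentiable at A with derivative δA ↦ trace( (M * B) * δA ). -/
open Matrix NormedSpace

attribute [local instance] Matrix.linftyOpNormedAddCommGroup Matrix.linftyOpNormedRing
  Matrix.linftyOpNormedSpace Matrix.linftyOpNormedAlgebra

/-!
Write `exp x = exp (x / k) ^ k`. Differentiating the power by the noncommutative product rule
produces `k` terms `E ^ (k - 1 - i) * (D h / k) * E ^ i`; a cyclic functional `τ`, applied after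
left multiplication by some `c` commuting with `a`, gives all of them the same value, whence
`τ (c * Dexp(a) h) = τ (c * exp ((1 - 1/k) • a) * Dexp(a/k) h)` for every `k ≥ 1`. The right-hand
side is continuous in `1/k`, and at `1/k = 0` it equals `τ (c * exp a * h)` since `Dexp(0) = id`.
-/

open Filter Topology

theorem apply_mul_pow_mul_mul_pow_of_commute {M β : Type*} [Monoid M] {τ : M → β}
    (hτ : ∀ x y, τ (x * y) = τ (y * x)) {c e : M} (hce : Commute c e) (i j : ℕ) (y : M) :
    τ (c * (e ^ j * y * e ^ i)) = τ (c * e ^ (j + i) * y) :=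
  calc τ (c * (e ^ j * y * e ^ i)) = τ ((c * e ^ j * y) * e ^ i) := by simp only [mul_assoc]
    _ = τ (e ^ i * c * e ^ j * y) := by rw [hτ]; simp only [mul_assoc]
    _ = τ (c * e ^ (j + i) * y) := by
        rw [← (hce.pow_right i).eq, mul_assoc c, ← pow_add, add_comm]

section BanachAlgebra

variable {𝕂 𝔸 F : Type*} [RCLike 𝕂] [NormedRing 𝔸] [NormedAlgebra 𝕂 𝔸] [CompleteSpace 𝔸]

theorem NormedSpace.contDiff_exp {n : WithTop ℕ∞} : ContDiff 𝕂 n (exp : 𝔸 → 𝔸) :=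
  AnalyticOnNhd.contDiff fun x _ => exp_analytic x

variable [NormedAlgebra ℚ 𝔸]

theorem NormedSpace.exp_eq_exp_inv_smul_pow {k : ℕ} (hk : k ≠ 0) (x : 𝔸) :
    exp x = exp ((k : 𝕂)⁻¹ • x) ^ k := by
  rw [← NormedSpace.exp_nsmul, ← Nat.cast_smul_eq_nsmul 𝕂, smul_inv_smul₀ (Nat.cast_ne_zero.2 hk)]

theorem NormedSpace.fderiv_exp_apply_eq_sum {k : ℕ} (hk : k ≠ 0) (a h : 𝔸) :
    fderiv 𝕂 exp a h = ∑ i ∈ Finset.range k,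
      exp ((k : 𝕂)⁻¹ • a) ^ (k - 1 - i) * ((k : 𝕂)⁻¹ • fderiv 𝕂 exp ((k : 𝕂)⁻¹ • a) h) *
        exp ((k : 𝕂)⁻¹ • a) ^ i := by
  have hroot : HasFDerivAt (fun x : 𝔸 => exp ((k : 𝕂)⁻¹ • x))
      ((k : 𝕂)⁻¹ • fderiv 𝕂 exp ((k : 𝕂)⁻¹ • a)) a := by
    have := (exp_analytic (𝕂 := 𝕂) ((k : 𝕂)⁻¹ • a)).differentiableAt.hasFDerivAt
    simpa [Function.comp_def] using this.comp a ((hasFDerivAt_id a).const_smul (k : 𝕂)⁻¹)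
  have hpow := hroot.fun_pow' k
  rw [funext fun x => (exp_eq_exp_inv_smul_pow (𝕂 := 𝕂) hk x).symm] at hpow
  rw [hpow.fderiv]
  simp [Nat.pred_eq_sub_one, MulOpposite.smul_eq_mul_unop]

variable [NormedAddCommGroup F] [NormedSpace 𝕂 F]

theorem map_mul_fderiv_exp_eq_rescale (τ : 𝔸 →L[𝕂] F) (hτ : ∀ x y, τ (x * y) = τ (y * x))
    {a c : 𝔸} (hca : Commute c a) {k : ℕ} (hk : k ≠ 0) (h : 𝔸) :
    τ (c * fderiv 𝕂 exp a h) =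
      τ (c * exp ((1 - (k : 𝕂)⁻¹) • a) * fderiv 𝕂 exp ((k : 𝕂)⁻¹ • a) h) := by
  have hk' : (k : 𝕂) ≠ 0 := Nat.cast_ne_zero.2 hk
  set e := exp ((k : 𝕂)⁻¹ • a)
  have hce : Commute c e := (hca.smul_right _).exp_right
  have hterm : ∀ i ∈ Finset.range k,
      τ (c * (e ^ (k - 1 - i) * ((k : 𝕂)⁻¹ • fderiv 𝕂 exp ((k : 𝕂)⁻¹ • a) h) * e ^ i)) =
        τ (c * e ^ (k - 1) * ((k : 𝕂)⁻¹ • fderiv 𝕂 exp ((k : 𝕂)⁻¹ • a) h)) := by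
    intro i hi
    rw [apply_mul_pow_mul_mul_pow_of_commute hτ hce,
      Nat.sub_add_cancel (Nat.le_sub_one_of_lt (Finset.mem_range.1 hi))]
  have hpow : e ^ (k - 1) = exp ((1 - (k : 𝕂)⁻¹) • a) := by
    rw [← NormedSpace.exp_nsmul, ← Nat.cast_smul_eq_nsmul 𝕂, smul_smul, Nat.cast_pred (by omega),
      sub_mul, mul_inv_cancel₀ hk', one_mul]
  rw [fderiv_exp_apply_eq_sum hk, Finset.mul_sum, map_sum, Finset.sum_congr rfl hterm,
    Finset.sum_const, Finset.card_range, hpow, mul_smul_comm, map_smul, ← Nat.cast_smul_eq_nsmul 𝕂,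
    smul_inv_smul₀ hk']

theorem map_mul_fderiv_exp_of_commute (τ : 𝔸 →L[𝕂] F) (hτ : ∀ x y, τ (x * y) = τ (y * x))
    {a c : 𝔸} (hca : Commute c a) (h : 𝔸) :
    τ (c * fderiv 𝕂 exp a h) = τ (c * exp a * h) := by
  set φ : 𝕂 → F := fun s => τ (c * exp ((1 - s) • a) * fderiv 𝕂 exp (s • a) h)
  have hφ : Continuous φ := by
    have := (contDiff_exp (𝕂 := 𝕂) (𝔸 := 𝔸) (n := 1)).continuous_fderiv one_ne_zero
    fun_prop
  have hφ_inv : ∀ᶠ k : ℕ in atTop, φ (k : 𝕂)⁻¹ = φ 1 := by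
    filter_upwards [eventually_ne_atTop 0] with k hk
    simp [φ, map_mul_fderiv_exp_eq_rescale τ hτ hca hk]
  have hlim : Tendsto (fun k : ℕ => φ (k : 𝕂)⁻¹) atTop (𝓝 (φ 0)) :=
    (hφ.tendsto 0).comp tendsto_inv_atTop_nhds_zero_nat
  have hφ_one : φ 1 = φ 0 := (tendsto_nhds_unique (hlim.congr' hφ_inv) tendsto_const_nhds).symm
  simpa [φ, hasFDerivAt_exp_zero.fderiv] using hφ_one

end BanachAlgebra

/-- Chain rule for composing a potential with the matrix exponential: if `M` commutes with
`A` and `α` has at `B = exp A` the Fréchet derivative `δC ↦ trace (M * δC)`, then `α ∘ exp`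
is Fréchet differentiable at `A` with derivative `δA ↦ trace ((M * B) * δA)`. -/
theorem potential_comp_exp_fderiv {n : ℕ}
    (A M : Matrix (Fin n) (Fin n) ℝ) (hMA : M * A = A * M)
    (α : Matrix (Fin n) (Fin n) ℝ → ℝ)
    (L : Matrix (Fin n) (Fin n) ℝ →L[ℝ] ℝ)
    (hL : ∀ δC : Matrix (Fin n) (Fin n) ℝ, L δC = Matrix.trace (M * δC))
    (hα : HasFDerivAt α L (exp A)) :
    DifferentiableAt ℝ (α ∘ exp) A ∧
      ∀ δA : Matrix (Fin n) (Fin n) ℝ,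
        fderiv ℝ (α ∘ exp) A δA = Matrix.trace (M * exp A * δA) := by
  have hexp : DifferentiableAt ℝ exp A := (exp_analytic A).differentiableAt
  have hcomp := hα.comp A hexp.hasFDerivAt
  refine ⟨hcomp.differentiableAt, fun δA => ?_⟩
  -- the statement's `fderiv` carries the entrywise topology of matrices, `hcomp` the norm one
  rw [show fderiv ℝ (α ∘ exp) A = _ from hcomp.fderiv]
  exact (hL _).trans <| map_mul_fderiv_exp_of_commute
    (traceLinearMap (Fin n) ℝ ℝ).toContinuousLinearMap trace_mul_comm hMA δA
end
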